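/- arXiv:1906.07722 — 3 statements merged into one kernel-verified Lean document; each statement's English description precedes it below -/
import Mathlib

section
/- For the flip J on l²(ℤ), the projection P onto nonnegative coordinates, Q = I − P, and the shifts U_n, both U_{−n} P J Q U_{−n} and U_n Q J P U_n converge K-strongly to J as n → ∞, while P J P = Q J Q = 0. -/
/-!
Coordinatewise, `U_{-n} P J Q U_{-n} - J` and `U_n Q J P U_n - J` are `-J` followed by the
restriction to `k < -n`, resp. to `k ≥ n`. Such an operator has norm at most `1`, and since `J`
maps `[-n, n)` onto itself it is absorbed by `1 - P_n` on both sides; hence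
`‖K T_n‖ ≤ ‖K (1 - P_n)‖ → 0` and `‖T_n K‖ ≤ ‖(1 - P_n) K‖ → 0` for `K ∈ 𝒦`.
`P J P = Q J Q = 0` because `J` swaps the two half-lines.
-/

open Filter Topology

section Absorption

variable {R α : Type*} [NonUnitalSeminormedRing R] {l : Filter α} {K : R} {Q T : α → R} {C : ℝ}

theorem tendsto_norm_mul_of_mul_left_eq (hK : Tendsto (fun a => ‖K * Q a‖) l (𝓝 0))
    (hQT : ∀ a, Q a * T a = T a) (hT : ∀ a, ‖T a‖ ≤ C) :
    Tendsto (fun a => ‖K * T a‖) l (𝓝 0) := by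
  refine squeeze_zero (fun _ => norm_nonneg _) (fun a => ?_) (by simpa using hK.mul_const C)
  calc ‖K * T a‖ = ‖K * Q a * T a‖ := by rw [mul_assoc, hQT]
    _ ≤ ‖K * Q a‖ * C := (norm_mul_le _ _).trans (by gcongr; exact hT a)

theorem tendsto_norm_mul_of_mul_right_eq (hK : Tendsto (fun a => ‖Q a * K‖) l (𝓝 0))
    (hTQ : ∀ a, T a * Q a = T a) (hT : ∀ a, ‖T a‖ ≤ C) :
    Tendsto (fun a => ‖T a * K‖) l (𝓝 0) := by
  refine squeeze_zero (fun _ => norm_nonneg _) (fun a => ?_) (by simpa using hK.const_mul C)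
  calc ‖T a * K‖ = ‖T a * (Q a * K)‖ := by rw [← mul_assoc, hTQ]
    _ ≤ C * ‖Q a * K‖ := (norm_mul_le _ _).trans (by gcongr; exact hT a)

end Absorption

namespace lp

variable {ι κ : Type*} {E : ι → Type*} {F : κ → Type*} [∀ i, NormedAddCommGroup (E i)]
  [∀ k, NormedAddCommGroup (F k)] {p : ENNReal}

theorem norm_le_of_norm_apply_equiv_le (hp : 0 < p.toReal) (σ : κ ≃ ι) {f : lp E p}
    {g : lp F p} (h : ∀ k, ‖f (σ k)‖ ≤ ‖g k‖) : ‖f‖ ≤ ‖g‖ := by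
  refine norm_le_of_tsum_le hp (norm_nonneg' g) ?_
  rw [norm_rpow_eq_tsum hp g, ← σ.tsum_eq (fun i => ‖f i‖ ^ p.toReal)]
  have hf : Summable fun k => ‖f (σ k)‖ ^ p.toReal :=
    (σ.summable_iff (f := fun i => ‖f i‖ ^ p.toReal)).2 ((lp.memℓp f).summable hp)
  exact hf.tsum_le_tsum (fun k => Real.rpow_le_rpow (norm_nonneg _) (h k) hp.le)
    ((lp.memℓp g).summable hp)

theorem opNorm_le_one_of_norm_apply_equiv_le {𝕜 : Type*} [NontriviallyNormedField 𝕜]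
    [∀ i, NormedSpace 𝕜 (E i)] [∀ k, NormedSpace 𝕜 (F k)] [Fact (1 ≤ p)] (hp : 0 < p.toReal)
    (σ : κ ≃ ι) {T : lp F p →L[𝕜] lp E p} (h : ∀ x k, ‖T x (σ k)‖ ≤ ‖x k‖) : ‖T‖ ≤ 1 :=
  T.opNorm_le_bound zero_le_one fun x => by
    rw [one_mul]; exact norm_le_of_norm_apply_equiv_le hp σ (h x)

theorem one_sub_apply_of_apply_eq_ite {𝕜 : Type*} [NormedField 𝕜] [∀ i, NormedSpace 𝕜 (E i)]
    [Fact (1 ≤ p)] {P : lp E p →L[𝕜] lp E p} {q : ι → Prop} [DecidablePred q]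
    (hP : ∀ x i, P x i = if q i then x i else 0) (x : lp E p) (i : ι) :
    (1 - P) x i = if q i then 0 else x i := by
  rw [sub_apply, coeFn_sub, Pi.sub_apply, one_apply_eq_self, hP]
  split_ifs <;> simp

end lp


local notation "ℓ²" => lp (fun _ : ℤ => ℂ) 2

section FlipOperators

variable {q : ℤ → Prop} [DecidablePred q] {T : ℓ² →L[ℂ] ℓ²}

theorem norm_le_one_of_apply_eq_ite_neg_flip
    (hT : ∀ x k, T x k = if q k then -x (-k - 1) else 0) : ‖T‖ ≤ 1 :=
  lp.opNorm_le_one_of_norm_apply_equiv_le (by norm_num) (Equiv.subLeft (-1)) fun x k => by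
    rw [hT, Equiv.subLeft_apply, show -(-1 - k) - 1 = k by ring]
    split_ifs <;> simp

variable {n : ℕ} {Pn : ℓ² →L[ℂ] ℓ²}

theorem one_sub_mul_eq_self_of_apply_eq_ite_neg_flip
    (hPn : ∀ x k, Pn x k = if -(n : ℤ) ≤ k ∧ k < n then x k else 0)
    (hq : ∀ k, q k → k < -n ∨ n ≤ k) (hT : ∀ x k, T x k = if q k then -x (-k - 1) else 0) :
    (1 - Pn) * T = T := by
  ext x k
  rw [mul_apply_eq_comp, lp.one_sub_apply_of_apply_eq_ite hPn, hT]
  split_ifs <;> first | rfl | (have := hq k ‹_›; omega)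

theorem mul_one_sub_eq_self_of_apply_eq_ite_neg_flip
    (hPn : ∀ x k, Pn x k = if -(n : ℤ) ≤ k ∧ k < n then x k else 0)
    (hq : ∀ k, q k → k < -n ∨ n ≤ k) (hT : ∀ x k, T x k = if q k then -x (-k - 1) else 0) :
    T * (1 - Pn) = T := by
  ext x k
  rw [mul_apply_eq_comp, hT, hT, lp.one_sub_apply_of_apply_eq_ite hPn]
  split_ifs <;> first | rfl | (have := hq k ‹_›; omega)

end FlipOperators

theorem tendsto_norm_comp_of_apply_eq_ite_neg_flip {Pn : ℕ → ℓ² →L[ℂ] ℓ²}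
    (hPn : ∀ n x k, Pn n x k = if -(n : ℤ) ≤ k ∧ k < n then x k else 0)
    {q : ℕ → ℤ → Prop} [∀ n, DecidablePred (q n)] (hq : ∀ n k, q n k → k < -n ∨ n ≤ k)
    {T : ℕ → ℓ² →L[ℂ] ℓ²} (hT : ∀ n x k, T n x k = if q n k then -x (-k - 1) else 0)
    {K : ℓ² →L[ℂ] ℓ²} (hK : Tendsto (fun m => ‖K ∘L (1 - Pn m)‖) atTop (𝓝 0) ∧
      Tendsto (fun m => ‖(1 - Pn m) ∘L K‖) atTop (𝓝 0)) :
    Tendsto (fun n => ‖K ∘L T n‖) atTop (𝓝 0) ∧ Tendsto (fun n => ‖T n ∘L K‖) atTop (𝓝 0) :=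
  have hT_le n := norm_le_one_of_apply_eq_ite_neg_flip (hT n)
  ⟨tendsto_norm_mul_of_mul_left_eq hK.1
      (fun n => one_sub_mul_eq_self_of_apply_eq_ite_neg_flip (hPn n) (hq n) (hT n)) hT_le,
    tendsto_norm_mul_of_mul_right_eq hK.2
      (fun n => mul_one_sub_eq_self_of_apply_eq_ite_neg_flip (hPn n) (hq n) (hT n)) hT_le⟩

section Compressions

variable {U : ℤ → ℓ² →L[ℂ] ℓ²} {P J : ℓ² →L[ℂ] ℓ²}

theorem comp_flip_comp_eq_zero (hJ : ∀ x k, J x k = x (-k - 1)) {q : ℤ → Prop}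
    [DecidablePred q] (hP : ∀ x k, P x k = if q k then x k else 0)
    (hq : ∀ k, q k → ¬q (-k - 1)) : P ∘L J ∘L P = 0 := by
  ext x k
  simp only [ContinuousLinearMap.comp_apply, hP, hJ]
  split_ifs with h h' <;> first | rfl | exact absurd h' (hq k h)

theorem shift_comp_PJQ_comp_shift_sub_flip_apply (hU : ∀ m x k, U m x k = x (k - m))
    (hP : ∀ x k, P x k = if 0 ≤ k then x k else 0) (hJ : ∀ x k, J x k = x (-k - 1)) (n : ℕ)
    (x : ℓ²) (k : ℤ) :
    (U (-(n : ℤ)) ∘L P ∘L J ∘L (1 - P) ∘L U (-(n : ℤ)) - J) x k =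
      if k < -(n : ℤ) then -x (-k - 1) else 0 := by
  rw [sub_apply, lp.coeFn_sub, Pi.sub_apply]
  simp only [ContinuousLinearMap.comp_apply, hU, hP, hJ, lp.one_sub_apply_of_apply_eq_ite hP]
  split_ifs <;> first | omega | ring_nf

theorem shift_comp_QJP_comp_shift_sub_flip_apply (hU : ∀ m x k, U m x k = x (k - m))
    (hP : ∀ x k, P x k = if 0 ≤ k then x k else 0) (hJ : ∀ x k, J x k = x (-k - 1)) (n : ℕ)
    (x : ℓ²) (k : ℤ) :
    (U n ∘L (1 - P) ∘L J ∘L P ∘L U n - J) x k = if (n : ℤ) ≤ k then -x (-k - 1) else 0 := by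
  rw [sub_apply, lp.coeFn_sub, Pi.sub_apply]
  simp only [ContinuousLinearMap.comp_apply, hU, hP, hJ, lp.one_sub_apply_of_apply_eq_ite hP]
  split_ifs <;> first | omega | ring_nf

end Compressions

/-- On `l²(ℤ)`: `P J P = Q J Q = 0`, while `U_{−n} P J Q U_{−n}` and `U_n Q J P U_n`
converge `𝒦`-strongly to the flip `J`. -/
theorem stmt_9
    (U : ℤ → (lp (fun _ : ℤ => ℂ) 2 →L[ℂ] lp (fun _ : ℤ => ℂ) 2))
    (hU : ∀ (m : ℤ) (x : lp (fun _ : ℤ => ℂ) 2) (k : ℤ), U m x k = x (k - m))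
    (P J : lp (fun _ : ℤ => ℂ) 2 →L[ℂ] lp (fun _ : ℤ => ℂ) 2)
    (hP : ∀ (x : lp (fun _ : ℤ => ℂ) 2) (k : ℤ), P x k = if 0 ≤ k then x k else 0)
    (hJ : ∀ (x : lp (fun _ : ℤ => ℂ) 2) (k : ℤ), J x k = x (-k - 1))
    (Pn : ℕ → (lp (fun _ : ℤ => ℂ) 2 →L[ℂ] lp (fun _ : ℤ => ℂ) 2))
    (hPn : ∀ (n : ℕ) (x : lp (fun _ : ℤ => ℂ) 2) (k : ℤ),
      Pn n x k = if -(n : ℤ) ≤ k ∧ k < (n : ℤ) then x k else 0)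
    (𝒦 : Set (lp (fun _ : ℤ => ℂ) 2 →L[ℂ] lp (fun _ : ℤ => ℂ) 2))
    (h𝒦 : 𝒦 = {K | Tendsto (fun m => ‖K ∘L (1 - Pn m)‖) atTop (nhds 0) ∧
           Tendsto (fun m => ‖(1 - Pn m) ∘L K‖) atTop (nhds 0)}) :
    P ∘L J ∘L P = 0 ∧ (1 - P) ∘L J ∘L (1 - P) = 0 ∧
    (∀ K ∈ 𝒦,
      Tendsto (fun n : ℕ =>
        ‖K ∘L (U (-(n : ℤ)) ∘L P ∘L J ∘L (1 - P) ∘L U (-(n : ℤ)) - J)‖) atTop (nhds 0) ∧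
      Tendsto (fun n : ℕ =>
        ‖(U (-(n : ℤ)) ∘L P ∘L J ∘L (1 - P) ∘L U (-(n : ℤ)) - J) ∘L K‖) atTop (nhds 0)) ∧
    (∀ K ∈ 𝒦,
      Tendsto (fun n : ℕ =>
        ‖K ∘L (U (n : ℤ) ∘L (1 - P) ∘L J ∘L P ∘L U (n : ℤ) - J)‖) atTop (nhds 0) ∧
      Tendsto (fun n : ℕ =>
        ‖(U (n : ℤ) ∘L (1 - P) ∘L J ∘L P ∘L U (n : ℤ) - J) ∘L K‖) atTop (nhds 0)) := by
  subst h𝒦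
  have hQ x k : (1 - P) x k = if ¬0 ≤ k then x k else 0 :=
    (lp.one_sub_apply_of_apply_eq_ite hP x k).trans (ite_not _ _ _).symm
  refine ⟨comp_flip_comp_eq_zero hJ hP fun k _ => by omega,
    comp_flip_comp_eq_zero hJ hQ fun k _ => by omega, fun K hK => ?_, fun K hK => ?_⟩
  · exact tendsto_norm_comp_of_apply_eq_ite_neg_flip hPn (fun n k hk => Or.inl hk)
      (shift_comp_PJQ_comp_shift_sub_flip_apply hU hP hJ) hK
  · exact tendsto_norm_comp_of_apply_eq_ite_neg_flip hPn (fun n k hk => Or.inr hk)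
      (shift_comp_QJP_comp_shift_sub_flip_apply hU hP hJ) hK
end

section
/- For τ in the open upper half of the unit circle (Im τ > 0), if ξ₁ and ξ₂ are multiplicative linear functionals on QC lying in the fiber M_τ(QC) (i.e., ξ_i(f) = f(τ) for all f ∈ C(𝕋)), and ξ₁ and ξ₂ agree on the subalgebra Q̃C of even quasicontinuous functions, then ξ₁ = ξ₂. -/
/-!
Write `f̌ t = f (-t)` and `τ = e^{iθ}`. For quasicontinuous `f`, both `f + f̌` and
`f · fourier 1 + f̌ · fourier (-1)` are even and quasicontinuous, so `ξ₁` and `ξ₂` agree on them.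
A character in the fiber over `τ` is multiplicative and sends `fourier (±1)` to `τ^{±1}`, so
`(ξ f, ξ f̌)` solves the linear system `x + y = s`, `τ x + τ⁻¹ y = s'` with the same right-hand
sides for `ξ₁` and `ξ₂`. Its determinant `τ⁻¹ - τ` vanishes only when `τ = ±1`.
-/

open MeasureTheory AddCircle Filter

theorem fourier_apply_neg {T : ℝ} (n : ℤ) (t : AddCircle T) : fourier n (-t) = fourier (-n) t := by
  rw [fourier_apply, fourier_apply, smul_neg, ← neg_smul]

variable {T : ℝ} [Fact (0 < T)]

theorem fourierCoeff_comp_neg (f : AddCircle T → ℂ) (n : ℤ) :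
    fourierCoeff (fun t => f (-t)) n = fourierCoeff f (-n) := by
  simp only [fourierCoeff]
  rw [← integral_neg_eq_self]
  simp only [neg_neg, fourier_apply_neg]

theorem fourierCoeff_mul_fourier (f : AddCircle T → ℂ) (m n : ℤ) :
    fourierCoeff (fun t => f t * fourier m t) n = fourierCoeff f (n - m) := by
  simp only [fourierCoeff, smul_eq_mul]
  congr 1 with t
  rw [show -(n - m) = -n + m by ring, fourier_add]
  ring

theorem fourierCoeff_const (c : ℂ) : fourierCoeff (fun _ : AddCircle T => c) = Pi.single 0 c := by
  have hc : (fun _ : AddCircle T => c) = c • ⇑(fourier 0 : C(AddCircle T, ℂ)) := by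
    ext t; simp
  ext n
  rw [hc, fourierCoeff.const_smul, fourierCoeff_fourier, Pi.single_apply, Pi.single_apply]
  simp

theorem fourierCoeff_sub_const {f : AddCircle T → ℂ} (hf : Integrable f haarAddCircle) (c : ℂ)
    (n : ℤ) :
    fourierCoeff (fun t => f t - c) n = fourierCoeff f n - (Pi.single 0 c : ℤ → ℂ) n := by
  have := congrFun (fourierCoeff.add hf (integrable_const (-c))) n
  rw [Pi.add_apply, fourierCoeff_const, Pi.single_neg, Pi.neg_apply] at this
  simp_rw [sub_eq_add_neg]
  exact this

theorem ae_comp_neg {p : AddCircle T → Prop} (h : ∀ᵐ t ∂haarAddCircle, p t) :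
    ∀ᵐ t ∂haarAddCircle, p (-t) :=
  (Measure.measurePreserving_neg haarAddCircle).quasiMeasurePreserving.ae h

theorem memLp_top_fourier (n : ℤ) : MemLp (fourier n : AddCircle T → ℂ) ⊤ haarAddCircle :=
  (map_continuous _).memLp_top_of_hasCompactSupport (.of_compactSpace _) _

variable {f : AddCircle T → ℂ}

/-- `f = g + h` almost everywhere with `g` continuous and `h ∈ L^∞` having no Fourier coefficients
at the frequencies in `E`. For `E = (· < 0)` this is membership in `C + H^∞`, for `E = (0 < ·)` in
`C + conj H^∞`. -/
def IsContAddAvoiding (E : ℤ → Prop) (f : AddCircle T → ℂ) : Prop :=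
  ∃ g h : AddCircle T → ℂ, Continuous g ∧ MemLp h ⊤ haarAddCircle ∧
    (∀ n : ℤ, E n → fourierCoeff h n = 0) ∧ ∀ᵐ t ∂haarAddCircle, f t = g t + h t

def IsQuasicontinuous (f : AddCircle T → ℂ) : Prop :=
  MemLp f ⊤ haarAddCircle ∧ IsContAddAvoiding (· < 0) f ∧ IsContAddAvoiding (0 < ·) f

namespace IsContAddAvoiding

variable {E E' : ℤ → Prop}

theorem of_continuous (hf : Continuous f) : IsContAddAvoiding E f :=
  ⟨f, 0, hf, MemLp.zero, fun n _ => by simp [fourierCoeff], ae_of_all _ fun t => by simp⟩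

theorem mono (hf : IsContAddAvoiding E f) (hE : ∀ n, E' n → E n) : IsContAddAvoiding E' f :=
  let ⟨g, h, hg, hh, hc, he⟩ := hf
  ⟨g, h, hg, hh, fun n hn => hc n (hE n hn), he⟩

theorem add {f₁ f₂ : AddCircle T → ℂ} (h₁ : IsContAddAvoiding E f₁)
    (h₂ : IsContAddAvoiding E f₂) : IsContAddAvoiding E (f₁ + f₂) := by
  obtain ⟨g₁, h₁, hg₁, hh₁, hc₁, he₁⟩ := h₁
  obtain ⟨g₂, h₂, hg₂, hh₂, hc₂, he₂⟩ := h₂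
  refine ⟨g₁ + g₂, h₁ + h₂, hg₁.add hg₂, hh₁.add hh₂, fun n hn => ?_, ?_⟩
  · rw [fourierCoeff.add (hh₁.integrable le_top) (hh₂.integrable le_top), Pi.add_apply,
      hc₁ n hn, hc₂ n hn, add_zero]
  · filter_upwards [he₁, he₂] with t ht₁ ht₂
    simp only [Pi.add_apply, ht₁, ht₂]
    ring

theorem comp_neg (hf : IsContAddAvoiding E f) :
    IsContAddAvoiding (fun n => E (-n)) (fun t => f (-t)) := by
  obtain ⟨g, h, hg, hh, hc, he⟩ := hf
  refine ⟨fun t => g (-t), fun t => h (-t), hg.comp continuous_neg,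
    hh.comp_measurePreserving (Measure.measurePreserving_neg _), fun n hn => ?_,
    ae_comp_neg (p := fun t => f t = g t + h t) he⟩
  rw [fourierCoeff_comp_neg]
  exact hc (-n) hn

theorem mul_fourier (hf : IsContAddAvoiding E f) (m : ℤ) :
    IsContAddAvoiding (fun n => E (n - m)) (fun t => f t * fourier m t) := by
  obtain ⟨g, h, hg, hh, hc, he⟩ := hf
  refine ⟨fun t => g t * fourier m t, fun t => h t * fourier m t, hg.mul (map_continuous _),
    (memLp_top_fourier m).mul' hh, fun n hn => ?_, ?_⟩
  · rw [fourierCoeff_mul_fourier]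
    exact hc _ hn
  · filter_upwards [he] with t ht
    rw [ht, add_mul]

/-- Multiplying by `fourier 1` moves the constant term of the `conj H^∞` part to frequency `1`;
it is split off into the continuous part. -/
theorem mul_fourier_one (hf : IsContAddAvoiding (0 < ·) f) :
    IsContAddAvoiding (0 < ·) (fun t => f t * fourier 1 t) := by
  obtain ⟨g, h, hg, hh, hc, he⟩ := hf
  set c := fourierCoeff h 0
  refine ⟨fun t => (g t + c) * fourier 1 t, fun t => (h t - c) * fourier 1 t,
    (hg.add continuous_const).mul (map_continuous _),
    (memLp_top_fourier 1).mul' (hh.sub (memLp_const c)), fun n hn => ?_, ?_⟩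
  · rw [fourierCoeff_mul_fourier, fourierCoeff_sub_const (hh.integrable le_top),
      Pi.single_apply]
    split_ifs with hn₁
    · rw [hn₁, sub_self]
    · rw [hc _ (by omega), sub_zero]
  · filter_upwards [he] with t ht
    rw [ht]
    ring

end IsContAddAvoiding

namespace IsQuasicontinuous

theorem of_continuous (hf : Continuous f) : IsQuasicontinuous f :=
  ⟨hf.memLp_top_of_hasCompactSupport (.of_compactSpace f) _, .of_continuous hf,
    .of_continuous hf⟩

theorem add {f₁ f₂ : AddCircle T → ℂ} (h₁ : IsQuasicontinuous f₁)
    (h₂ : IsQuasicontinuous f₂) : IsQuasicontinuous (f₁ + f₂) :=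
  ⟨h₁.1.add h₂.1, h₁.2.1.add h₂.2.1, h₁.2.2.add h₂.2.2⟩

theorem comp_neg (hf : IsQuasicontinuous f) : IsQuasicontinuous (fun t => f (-t)) :=
  ⟨hf.1.comp_measurePreserving (Measure.measurePreserving_neg _),
    hf.2.2.comp_neg.mono fun _ => neg_pos.mpr, hf.2.1.comp_neg.mono fun _ => neg_neg_of_pos⟩

theorem mul_fourier_one (hf : IsQuasicontinuous f) :
    IsQuasicontinuous (fun t => f t * fourier 1 t) :=
  ⟨(memLp_top_fourier 1).mul' hf.1, (hf.2.1.mul_fourier 1).mono fun _ hn => by linarith,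
    hf.2.2.mul_fourier_one⟩

theorem mul_fourier_neg_one (hf : IsQuasicontinuous f) :
    IsQuasicontinuous (fun t => f t * fourier (-1) t) := by
  simpa only [neg_neg, fourier_apply_neg] using hf.comp_neg.mul_fourier_one.comp_neg

end IsQuasicontinuous

theorem fourier_one_ne_fourier_neg_one {θ : ℝ} (h₀ : 0 < θ) (h₁ : θ < T / 2) :
    fourier 1 (θ : AddCircle T) ≠ fourier (-1) (θ : AddCircle T) := by
  have hT : 0 < T := Fact.out
  rw [fourier_apply, fourier_apply, Ne, Circle.coe_inj, (injective_toCircle hT.ne').eq_iff,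
    one_zsmul, neg_one_zsmul, eq_neg_iff_add_eq_zero, ← coe_add, coe_eq_zero_iff]
  rintro ⟨n, hn⟩
  rw [zsmul_eq_mul] at hn
  have h₂ : (0 : ℝ) < n := pos_of_mul_pos_left (by linarith) hT.le
  have h₃ : (n : ℝ) < 1 := by nlinarith
  have hn₀ : (0 : ℤ) < n := by exact_mod_cast h₂
  have hn₁ : n < (1 : ℤ) := by exact_mod_cast h₃
  omega

theorem eq_of_add_eq_of_mul_add_mul_eq {a b x₁ x₂ y₁ y₂ : ℂ} (hab : a ≠ b)
    (h₁ : x₁ + y₁ = x₂ + y₂) (h₂ : x₁ * a + y₁ * b = x₂ * a + y₂ * b) : x₁ = x₂ := by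
  have h : (x₁ - x₂) * (a - b) = 0 := by linear_combination h₂ - b * h₁
  exact sub_eq_zero.mp ((mul_eq_zero.mp h).resolve_right (sub_ne_zero.mpr hab))

theorem apply_mul_fourier_add_comp_neg_mul_fourier {ξ : (AddCircle T → ℂ) → ℂ} {x : AddCircle T}
    (hadd : ∀ f g, IsQuasicontinuous f → IsQuasicontinuous g → ξ (f + g) = ξ f + ξ g)
    (hmul : ∀ f g, IsQuasicontinuous f → IsQuasicontinuous g → ξ (f * g) = ξ f * ξ g)
    (heval : ∀ g, Continuous g → ξ g = g x) (hf : IsQuasicontinuous f) :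
    ξ (f * (fourier 1 : AddCircle T → ℂ) +
        (fun t => f (-t)) * (fourier (-1) : AddCircle T → ℂ)) =
      ξ f * fourier 1 x + ξ (fun t => f (-t)) * fourier (-1) x := by
  have h₁ : IsQuasicontinuous (f * (fourier 1 : AddCircle T → ℂ)) := hf.mul_fourier_one
  have h₂ : IsQuasicontinuous ((fun t => f (-t)) * (fourier (-1) : AddCircle T → ℂ)) :=
    hf.comp_neg.mul_fourier_neg_one
  rw [hadd _ _ h₁ h₂,
    hmul _ _ hf (.of_continuous (map_continuous _)),
    hmul _ _ hf.comp_neg (.of_continuous (map_continuous _)),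
    heval _ (map_continuous _), heval _ (map_continuous _)]

/-- For `τ = e^{iθ}` in the open upper semicircle (`0 < θ < π`), two characters of `QC` lying in
the fiber `M_τ(QC)` (i.e. acting as evaluation at `τ` on continuous functions) which agree on
the even quasicontinuous functions `Q̃C` are equal. -/
theorem stmt_15 [Fact (0 < 2 * Real.pi)]
    (θ : ℝ) (hθ₀ : 0 < θ) (hθπ : θ < Real.pi) :
    let μ := (haarAddCircle : Measure (AddCircle (2 * Real.pi)))
    let QC : (AddCircle (2 * Real.pi) → ℂ) → Prop := fun f =>
      MemLp f ⊤ μ ∧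
      (∃ g h : AddCircle (2 * Real.pi) → ℂ, Continuous g ∧ MemLp h ⊤ μ ∧
        (∀ n : ℤ, n < 0 → fourierCoeff h n = 0) ∧ (∀ᵐ t ∂μ, f t = g t + h t)) ∧
      (∃ g h : AddCircle (2 * Real.pi) → ℂ, Continuous g ∧ MemLp h ⊤ μ ∧
        (∀ n : ℤ, 0 < n → fourierCoeff h n = 0) ∧ (∀ᵐ t ∂μ, f t = g t + h t))
    ∀ ξ₁ ξ₂ : (AddCircle (2 * Real.pi) → ℂ) → ℂ,
      (∀ f g, QC f → QC g → (f =ᵐ[μ] g) → ξ₁ f = ξ₁ g) →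
      (∀ f g, QC f → QC g → (f =ᵐ[μ] g) → ξ₂ f = ξ₂ g) →
      (∀ f g, QC f → QC g → ξ₁ (f + g) = ξ₁ f + ξ₁ g ∧ ξ₂ (f + g) = ξ₂ f + ξ₂ g) →
      (∀ f g, QC f → QC g → ξ₁ (f * g) = ξ₁ f * ξ₁ g ∧ ξ₂ (f * g) = ξ₂ f * ξ₂ g) →
      (∀ (c : ℂ) f, QC f → ξ₁ (c • f) = c * ξ₁ f ∧ ξ₂ (c • f) = c * ξ₂ f) →
      (∀ g : AddCircle (2 * Real.pi) → ℂ, Continuous g →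
        ξ₁ g = g ((θ : ℝ) : AddCircle (2 * Real.pi)) ∧
        ξ₂ g = g ((θ : ℝ) : AddCircle (2 * Real.pi))) →
      (∀ q, QC q → (∀ᵐ t ∂μ, q (-t) = q t) → ξ₁ q = ξ₂ q) →
      ∀ f, QC f → ξ₁ f = ξ₂ f := by
  intro μ QC ξ₁ ξ₂ _ _ hadd hmul _ heval heven f hf
  have hf' : IsQuasicontinuous fun t => f (-t) := IsQuasicontinuous.comp_neg hf
  refine eq_of_add_eq_of_mul_add_mul_eq
    (fourier_one_ne_fourier_neg_one hθ₀ (T := 2 * Real.pi) (by linarith))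
    (y₁ := ξ₁ fun t => f (-t)) (y₂ := ξ₂ fun t => f (-t)) ?_ ?_
  · rw [← (hadd _ _ hf hf').1, ← (hadd _ _ hf hf').2]
    exact heven _ (IsQuasicontinuous.add hf hf') (ae_of_all _ fun t => by simp [add_comm])
  · rw [← apply_mul_fourier_add_comp_neg_mul_fourier (fun _ _ h₁ h₂ => (hadd _ _ h₁ h₂).1)
        (fun _ _ h₁ h₂ => (hmul _ _ h₁ h₂).1) (fun _ hg => (heval _ hg).1) hf,
      ← apply_mul_fourier_add_comp_neg_mul_fourier (fun _ _ h₁ h₂ => (hadd _ _ h₁ h₂).2)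
        (fun _ _ h₁ h₂ => (hmul _ _ h₁ h₂).2) (fun _ hg => (heval _ hg).2) hf]
    refine heven _ ((IsQuasicontinuous.mul_fourier_one hf).add hf'.mul_fourier_neg_one)
      (ae_of_all _ fun t => ?_)
    simp only [Pi.add_apply, Pi.mul_apply, neg_neg, fourier_apply_neg]
    ring
end

section
/- Let F₀ be the set of bounded sequences (A_n) of operators on Im(P_n) ⊆ l²_H(ℤ) for which the K-strong limits 𝒫(A_n) = s-lim P_n A_n P_n and 𝒲(A_n) = s-lim W_n A_n W_n exist, and let J = {(P_n K P_n + W_n L W_n + C_n) : K, L ∈ K, ‖C_n‖ → 0}. If (A_n) ∈ F₀ and both 𝒫(A_n) and 𝒲(A_n) are invertible in the algebra A, and if (A_n) + J is invertible in F₀/J, then (A_n) is stable. -/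
open Filter
open scoped ENNReal

section Aux

variable {R : Type*} [SeminormedRing R]

lemma aux_norm_left {P Z : R} (h : ‖P‖ ≤ 1) : ‖P * Z‖ ≤ ‖Z‖ :=
  le_trans (norm_mul_le _ _) (mul_le_of_le_one_left (norm_nonneg Z) h)

lemma aux_norm_right {P Z : R} (h : ‖P‖ ≤ 1) : ‖Z * P‖ ≤ ‖Z‖ :=
  le_trans (norm_mul_le _ _) (mul_le_of_le_one_right (norm_nonneg Z) h)

lemma aux_norm_sand {P W Z : R} (hP : ‖P‖ ≤ 1) (hW : ‖W‖ ≤ 1) :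
    ‖P * (Z * W)‖ ≤ ‖Z‖ :=
  le_trans (aux_norm_left hP) (aux_norm_right hW)

lemma aux_corner {S : Type*} [Ring S] {P Z : S} (hPP : P * P = P) (hc : P * (Z * P) = Z) :
    P * Z = Z ∧ Z * P = Z := by
  constructor
  · conv_lhs => rw [← hc]
    rw [← mul_assoc, hPP, hc]
  · conv_lhs => rw [← hc]
    rw [mul_assoc, mul_assoc, hPP, hc]

end Aux

section AuxLp

variable {H : Type*} [NormedAddCommGroup H] [InnerProductSpace ℂ H] [CompleteSpace H]
variable (P W : lp (fun _ : ℤ => H) 2 →L[ℂ] lp (fun _ : ℤ => H) 2) (n : ℕ)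
variable (hP : ∀ (x : lp (fun _ : ℤ => H) 2) (k : ℤ),
      P x k = if -(n : ℤ) ≤ k ∧ k < (n : ℤ) then x k else 0)
variable (hW : ∀ (x : lp (fun _ : ℤ => H) 2) (k : ℤ),
      W x k = if 0 ≤ k ∧ k < (n : ℤ) then x ((n : ℤ) - 1 - k)
        else if -(n : ℤ) ≤ k ∧ k < 0 then x (-(n : ℤ) - 1 - k) else 0)

include hP in
lemma aux_PP : P ∘L P = P := by
  refine ContinuousLinearMap.ext fun x => lp.ext (funext fun k => ?_)
  show P (P x) k = P x k
  rw [hP (P x) k, hP x k]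
  split_ifs <;> rfl

include hP in
lemma aux_Pnorm : ‖P‖ ≤ 1 := by
  refine ContinuousLinearMap.opNorm_le_bound _ zero_le_one fun x => ?_
  rw [one_mul]
  have h2 : (0:ℝ) < (2 : ℝ≥0∞).toReal := by simp
  refine lp.norm_le_of_forall_sum_le h2 (norm_nonneg x) fun s => ?_
  calc ∑ i ∈ s, ‖(P x) i‖ ^ (2 : ℝ≥0∞).toReal
      ≤ ∑ i ∈ s, ‖x i‖ ^ (2 : ℝ≥0∞).toReal := by
        refine Finset.sum_le_sum fun i _ => ?_
        refine Real.rpow_le_rpow (norm_nonneg _) ?_ h2.le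
        rw [hP x i]
        split_ifs
        · exact le_rfl
        · simp
    _ ≤ ‖x‖ ^ (2 : ℝ≥0∞).toReal := lp.sum_rpow_le_norm_rpow h2 x s

include hW hP in
lemma aux_WW : W ∘L W = P := by
  refine ContinuousLinearMap.ext fun x => lp.ext (funext fun k => ?_)
  show W (W x) k = P x k
  rw [hW (W x) k, hP x k, hW x ((n : ℤ) - 1 - k), hW x (-(n : ℤ) - 1 - k),
    show (n : ℤ) - 1 - ((n : ℤ) - 1 - k) = k by ring,
    show -(n : ℤ) - 1 - (-(n : ℤ) - 1 - k) = k by ring]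
  split_ifs <;> first | rfl | (exfalso; omega)

include hW hP in
lemma aux_WP : W ∘L P = W := by
  refine ContinuousLinearMap.ext fun x => lp.ext (funext fun k => ?_)
  show W (P x) k = W x k
  rw [hW (P x) k, hW x k, hP x ((n : ℤ) - 1 - k), hP x (-(n : ℤ) - 1 - k)]
  split_ifs <;> first | rfl | (exfalso; omega)

include hW hP in
lemma aux_PW : P ∘L W = W := by
  refine ContinuousLinearMap.ext fun x => lp.ext (funext fun k => ?_)
  show P (W x) k = W x k
  rw [hP (W x) k, hW x k]
  split_ifs <;> first | rfl | (exfalso; omega)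

include hW in
lemma aux_Wnorm : ‖W‖ ≤ 1 := by
  refine ContinuousLinearMap.opNorm_le_bound _ zero_le_one fun x => ?_
  rw [one_mul]
  have h2 : (0:ℝ) < (2 : ℝ≥0∞).toReal := by simp
  refine lp.norm_le_of_forall_sum_le h2 (norm_nonneg x) fun s => ?_
  set σ : ℤ → ℤ := fun k => if 0 ≤ k ∧ k < (n : ℤ) then (n : ℤ) - 1 - k
    else if -(n : ℤ) ≤ k ∧ k < 0 then -(n : ℤ) - 1 - k else k with hσ
  have hσσ : ∀ k, σ (σ k) = k := by
    intro k
    simp only [hσ]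
    split_ifs <;> omega
  have hinj : Function.Injective σ := Function.LeftInverse.injective hσσ
  have hpt : ∀ k, ‖(W x) k‖ ≤ ‖x (σ k)‖ := by
    intro k
    rw [hW x k]
    simp only [hσ]
    split_ifs <;> simp
  calc ∑ i ∈ s, ‖(W x) i‖ ^ (2 : ℝ≥0∞).toReal
      ≤ ∑ i ∈ s, ‖x (σ i)‖ ^ (2 : ℝ≥0∞).toReal :=
        Finset.sum_le_sum fun i _ => Real.rpow_le_rpow (norm_nonneg _) (hpt i) h2.le
    _ = ∑ j ∈ s.image σ, ‖x j‖ ^ (2 : ℝ≥0∞).toReal := by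
        rw [Finset.sum_image (fun a _ b _ h => hinj h)]
    _ ≤ ‖x‖ ^ (2 : ℝ≥0∞).toReal := lp.sum_rpow_le_norm_rpow h2 x _

end AuxLp

set_option maxHeartbeats 2000000 in
set_option synthInstance.maxHeartbeats 400000 in
/-- Lifting theorem (sufficiency): if `(A_n)` is a bounded sequence of compressions
(`A_n = P_n A_n P_n`) whose `𝒦`-strong limits `𝒫(A_n)` and `𝒲(A_n)` exist and are invertible
in `𝒜`, and if `(A_n)` is invertible modulo the ideal
`J = {(P_n K P_n + W_n L W_n + C_n) : K, L ∈ 𝒦, ‖C_n‖ → 0}`, then `(A_n)` is stable. -/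
theorem stmt_19 {H : Type*} [NormedAddCommGroup H] [InnerProductSpace ℂ H] [CompleteSpace H]
    (Pn Wn : ℕ → (lp (fun _ : ℤ => H) 2 →L[ℂ] lp (fun _ : ℤ => H) 2))
    (hPn : ∀ (n : ℕ) (x : lp (fun _ : ℤ => H) 2) (k : ℤ),
      Pn n x k = if -(n : ℤ) ≤ k ∧ k < (n : ℤ) then x k else 0)
    (hWn : ∀ (n : ℕ) (x : lp (fun _ : ℤ => H) 2) (k : ℤ),
      Wn n x k = if 0 ≤ k ∧ k < (n : ℤ) then x ((n : ℤ) - 1 - k)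
        else if -(n : ℤ) ≤ k ∧ k < 0 then x (-(n : ℤ) - 1 - k) else 0) :
    let 𝒦 : Set (lp (fun _ : ℤ => H) 2 →L[ℂ] lp (fun _ : ℤ => H) 2) :=
      {K | Tendsto (fun n => ‖K ∘L (1 - Pn n)‖) atTop (nhds 0) ∧
           Tendsto (fun n => ‖(1 - Pn n) ∘L K‖) atTop (nhds 0)}
    let 𝒜 : Set (lp (fun _ : ℤ => H) 2 →L[ℂ] lp (fun _ : ℤ => H) 2) :=
      {A | ∀ K ∈ 𝒦, A ∘L K ∈ 𝒦 ∧ K ∘L A ∈ 𝒦}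
    let KStrong : (ℕ → (lp (fun _ : ℤ => H) 2 →L[ℂ] lp (fun _ : ℤ => H) 2)) →
        (lp (fun _ : ℤ => H) 2 →L[ℂ] lp (fun _ : ℤ => H) 2) → Prop := fun T S =>
      ∀ K ∈ 𝒦, Tendsto (fun n => ‖K ∘L (T n - S)‖) atTop (nhds 0) ∧
        Tendsto (fun n => ‖(T n - S) ∘L K‖) atTop (nhds 0)
    ∀ (Aseq : ℕ → (lp (fun _ : ℤ => H) 2 →L[ℂ] lp (fun _ : ℤ => H) 2))
      (PA WA : lp (fun _ : ℤ => H) 2 →L[ℂ] lp (fun _ : ℤ => H) 2),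
      (∀ n, Pn n ∘L Aseq n ∘L Pn n = Aseq n) →
      (∃ C : ℝ, ∀ n, ‖Aseq n‖ ≤ C) →
      KStrong (fun n => Pn n ∘L Aseq n ∘L Pn n) PA →
      KStrong (fun n => Wn n ∘L Aseq n ∘L Wn n) WA →
      PA ∈ 𝒜 → WA ∈ 𝒜 →
      (∃ B ∈ 𝒜, PA ∘L B = 1 ∧ B ∘L PA = 1) →
      (∃ B ∈ 𝒜, WA ∘L B = 1 ∧ B ∘L WA = 1) →
      (∃ (Bseq : ℕ → (lp (fun _ : ℤ => H) 2 →L[ℂ] lp (fun _ : ℤ => H) 2))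
         (PB WB : lp (fun _ : ℤ => H) 2 →L[ℂ] lp (fun _ : ℤ => H) 2),
        (∀ n, Pn n ∘L Bseq n ∘L Pn n = Bseq n) ∧
        (∃ C : ℝ, ∀ n, ‖Bseq n‖ ≤ C) ∧
        KStrong (fun n => Pn n ∘L Bseq n ∘L Pn n) PB ∧
        KStrong (fun n => Wn n ∘L Bseq n ∘L Wn n) WB ∧
        (∃ K ∈ 𝒦, ∃ L ∈ 𝒦,
          ∃ Cseq : ℕ → (lp (fun _ : ℤ => H) 2 →L[ℂ] lp (fun _ : ℤ => H) 2),
          Tendsto (fun n => ‖Cseq n‖) atTop (nhds 0) ∧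
          ∀ n, Aseq n ∘L Bseq n = Pn n + Pn n ∘L K ∘L Pn n + Wn n ∘L L ∘L Wn n + Cseq n) ∧
        (∃ K ∈ 𝒦, ∃ L ∈ 𝒦,
          ∃ Cseq : ℕ → (lp (fun _ : ℤ => H) 2 →L[ℂ] lp (fun _ : ℤ => H) 2),
          Tendsto (fun n => ‖Cseq n‖) atTop (nhds 0) ∧
          ∀ n, Bseq n ∘L Aseq n = Pn n + Pn n ∘L K ∘L Pn n + Wn n ∘L L ∘L Wn n + Cseq n)) →
      ∃ (n₀ : ℕ) (C : ℝ), ∀ n ≥ n₀,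
        ∃ B : lp (fun _ : ℤ => H) 2 →L[ℂ] lp (fun _ : ℤ => H) 2,
          Pn n ∘L B ∘L Pn n = B ∧ Aseq n ∘L B = Pn n ∧ B ∘L Aseq n = Pn n ∧ ‖B‖ ≤ C := by
  intro 𝒦 𝒜 KStrong Aseq PA WA hAc hAb hKP hKW hPAA hWAA hPAi hWAi hmod
  obtain ⟨PAinv, hPAinvA, hPA1, hPA2⟩ := hPAi
  obtain ⟨WAinv, hWAinvA, hWA1, hWA2⟩ := hWAi
  obtain ⟨Bseq, PB, WB, hBc, ⟨CB, hCB⟩, -, -,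
    ⟨K, hK, L, hL, Cs, hCs, hAB⟩, ⟨K', hK', L', hL', Cs', hCs', hBA⟩⟩ := hmod
  -- basic projection algebra
  have hPP : ∀ n, Pn n * Pn n = Pn n := fun n => aux_PP (Pn n) n (hPn n)
  have hWW : ∀ n, Wn n * Wn n = Pn n := fun n => aux_WW (Pn n) (Wn n) n (hPn n) (hWn n)
  have hWP : ∀ n, Wn n * Pn n = Wn n := fun n => aux_WP (Pn n) (Wn n) n (hPn n) (hWn n)
  have hPW : ∀ n, Pn n * Wn n = Wn n := fun n => aux_PW (Pn n) (Wn n) n (hPn n) (hWn n)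
  have hP1 : ∀ n, ‖Pn n‖ ≤ 1 := fun n => aux_Pnorm (Pn n) n (hPn n)
  have hW1 : ∀ n, ‖Wn n‖ ≤ 1 := fun n => aux_Wnorm (Wn n) n (hWn n)
  have hAc' : ∀ n, Pn n * (Aseq n * Pn n) = Aseq n := hAc
  have hBc' : ∀ n, Pn n * (Bseq n * Pn n) = Bseq n := hBc
  have hPA_ : ∀ n, Pn n * Aseq n = Aseq n := fun n => (aux_corner (hPP n) (hAc' n)).1
  have hAP_ : ∀ n, Aseq n * Pn n = Aseq n := fun n => (aux_corner (hPP n) (hAc' n)).2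
  have hPB_ : ∀ n, Pn n * Bseq n = Bseq n := fun n => (aux_corner (hPP n) (hBc' n)).1
  have hBP_ : ∀ n, Bseq n * Pn n = Bseq n := fun n => (aux_corner (hPP n) (hBc' n)).2
  -- correction operators
  set X : lp (fun _ : ℤ => H) 2 →L[ℂ] lp (fun _ : ℤ => H) 2 := PAinv * K with hXdef
  set Y : lp (fun _ : ℤ => H) 2 →L[ℂ] lp (fun _ : ℤ => H) 2 := WAinv * L with hYdef
  set X' : lp (fun _ : ℤ => H) 2 →L[ℂ] lp (fun _ : ℤ => H) 2 := K' * PAinv with hX'def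
  set Y' : lp (fun _ : ℤ => H) 2 →L[ℂ] lp (fun _ : ℤ => H) 2 := L' * WAinv with hY'def
  have hX : X ∈ 𝒦 := (hPAinvA K hK).1
  have hY : Y ∈ 𝒦 := (hWAinvA L hL).1
  have hX' : X' ∈ 𝒦 := (hPAinvA K' hK').2
  have hY' : Y' ∈ 𝒦 := (hWAinvA L' hL').2
  have hPA1' : PA * PAinv = 1 := hPA1
  have hPA2' : PAinv * PA = 1 := hPA2
  have hWA1' : WA * WAinv = 1 := hWA1
  have hWA2' : WAinv * WA = 1 := hWA2
  have hXK : PA * X = K := by rw [hXdef, ← mul_assoc, hPA1', one_mul]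
  have hYL : WA * Y = L := by rw [hYdef, ← mul_assoc, hWA1', one_mul]
  have hX'K : X' * PA = K' := by rw [hX'def, mul_assoc, hPA2', mul_one]
  have hY'L : Y' * WA = L' := by rw [hY'def, mul_assoc, hWA2', mul_one]
  have hAB' : ∀ n, Aseq n * Bseq n
      = Pn n + Pn n * (K * Pn n) + Wn n * (L * Wn n) + Cs n := hAB
  have hBA' : ∀ n, Bseq n * Aseq n
      = Pn n + Pn n * (K' * Pn n) + Wn n * (L' * Wn n) + Cs' n := hBA
  -- corrected approximate inverses
  set B1 : ℕ → (lp (fun _ : ℤ => H) 2 →L[ℂ] lp (fun _ : ℤ => H) 2) :=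
    fun n => Bseq n - Pn n * (X * Pn n) - Wn n * (Y * Wn n) with hB1def
  set B2 : ℕ → (lp (fun _ : ℤ => H) 2 →L[ℂ] lp (fun _ : ℤ => H) 2) :=
    fun n => Bseq n - Pn n * (X' * Pn n) - Wn n * (Y' * Wn n) with hB2def
  set D : ℕ → (lp (fun _ : ℤ => H) 2 →L[ℂ] lp (fun _ : ℤ => H) 2) :=
    fun n => Cs n - ((Aseq n - PA) * X) * Pn n - ((1 - Pn n) * K) * Pn n
      - Wn n * (((Wn n * (Aseq n * Wn n) - WA) * Y) * Wn n) with hDdef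
  set E : ℕ → (lp (fun _ : ℤ => H) 2 →L[ℂ] lp (fun _ : ℤ => H) 2) :=
    fun n => Cs' n - Pn n * (X' * (Aseq n - PA)) - Pn n * (K' * (1 - Pn n))
      - Wn n * ((Y' * (Wn n * (Aseq n * Wn n) - WA)) * Wn n) with hEdef
  have hDeq : ∀ n, Aseq n * B1 n = Pn n + D n := by
    intro n
    have t1a : Aseq n * (Pn n * (X * Pn n)) = ((Aseq n - PA) * X) * Pn n + K * Pn n := by
      have h1 : Aseq n * (Pn n * (X * Pn n)) = Aseq n * (X * Pn n) := by
        rw [← mul_assoc, hAP_ n]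
      rw [h1, sub_mul, hXK]
      noncomm_ring
    have t2a : Aseq n * (Wn n * (Y * Wn n))
        = Wn n * (((Wn n * (Aseq n * Wn n) - WA) * Y) * Wn n) + Wn n * (L * Wn n) := by
      have hWWA : (Wn n * Wn n) * Aseq n = Aseq n := by rw [hWW n, hPA_ n]
      conv_lhs => rw [← hWWA]
      rw [sub_mul, hYL]
      noncomm_ring
    have expand : Aseq n * B1 n = Aseq n * Bseq n - Aseq n * (Pn n * (X * Pn n))
        - Aseq n * (Wn n * (Y * Wn n)) := by
      simp only [hB1def]
      noncomm_ring
    rw [expand, hAB' n, t1a, t2a]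
    simp only [hDdef]
    noncomm_ring
  have hEeq : ∀ n, B2 n * Aseq n = Pn n + E n := by
    intro n
    have t1b : (Pn n * (X' * Pn n)) * Aseq n
        = Pn n * (X' * (Aseq n - PA)) + Pn n * K' := by
      have h1 : (Pn n * (X' * Pn n)) * Aseq n = Pn n * (X' * Aseq n) := by
        rw [mul_assoc, mul_assoc, hPA_ n]
      rw [h1, mul_sub, hX'K]
      noncomm_ring
    have t2b : (Wn n * (Y' * Wn n)) * Aseq n
        = Wn n * ((Y' * (Wn n * (Aseq n * Wn n) - WA)) * Wn n) + Wn n * (L' * Wn n) := by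
      have hAWW : Aseq n * (Wn n * Wn n) = Aseq n := by rw [hWW n, hAP_ n]
      conv_lhs => rw [← hAWW]
      rw [mul_sub, hY'L]
      noncomm_ring
    have expand : B2 n * Aseq n = Bseq n * Aseq n - (Pn n * (X' * Pn n)) * Aseq n
        - (Wn n * (Y' * Wn n)) * Aseq n := by
      simp only [hB2def]
      noncomm_ring
    rw [expand, hBA' n, t1b, t2b]
    simp only [hEdef]
    noncomm_ring
  -- norm limits
  have tX : Tendsto (fun n => ‖(Aseq n - PA) * X‖) atTop (nhds 0) := by
    have h := (hKP X hX).2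
    simp only [hAc] at h
    exact h
  have tK : Tendsto (fun n => ‖(1 - Pn n) * K‖) atTop (nhds 0) := hK.2
  have tWY : Tendsto (fun n => ‖(Wn n * (Aseq n * Wn n) - WA) * Y‖) atTop (nhds 0) :=
    (hKW Y hY).2
  have tX' : Tendsto (fun n => ‖X' * (Aseq n - PA)‖) atTop (nhds 0) := by
    have h := (hKP X' hX').1
    simp only [hAc] at h
    exact h
  have tK' : Tendsto (fun n => ‖K' * (1 - Pn n)‖) atTop (nhds 0) := hK'.1
  have tWY' : Tendsto (fun n => ‖Y' * (Wn n * (Aseq n * Wn n) - WA)‖) atTop (nhds 0) :=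
    (hKW Y' hY').1
  have hDlim : Tendsto (fun n => ‖D n‖) atTop (nhds 0) := by
    have hb : ∀ n, ‖D n‖ ≤ ‖Cs n‖ + (‖(Aseq n - PA) * X‖
        + (‖(1 - Pn n) * K‖ + ‖(Wn n * (Aseq n * Wn n) - WA) * Y‖)) := by
      intro n
      have h1 : ‖((Aseq n - PA) * X) * Pn n‖ ≤ ‖(Aseq n - PA) * X‖ :=
        aux_norm_right (hP1 n)
      have h2 : ‖((1 - Pn n) * K) * Pn n‖ ≤ ‖(1 - Pn n) * K‖ := aux_norm_right (hP1 n)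
      have h3 : ‖Wn n * ((((Wn n * (Aseq n * Wn n)) - WA) * Y) * Wn n)‖
          ≤ ‖(Wn n * (Aseq n * Wn n) - WA) * Y‖ := aux_norm_sand (hW1 n) (hW1 n)
      have h4 := norm_sub_le (Cs n - ((Aseq n - PA) * X) * Pn n - ((1 - Pn n) * K) * Pn n)
        (Wn n * (((Wn n * (Aseq n * Wn n) - WA) * Y) * Wn n))
      have h5 := norm_sub_le (Cs n - ((Aseq n - PA) * X) * Pn n) (((1 - Pn n) * K) * Pn n)
      have h6 := norm_sub_le (Cs n) (((Aseq n - PA) * X) * Pn n)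
      simp only [hDdef]
      linarith
    have hsum : Tendsto (fun n => ‖Cs n‖ + (‖(Aseq n - PA) * X‖
        + (‖(1 - Pn n) * K‖ + ‖(Wn n * (Aseq n * Wn n) - WA) * Y‖))) atTop (nhds 0) := by
      have := hCs.add (tX.add (tK.add tWY))
      simpa using this
    exact squeeze_zero (fun n => norm_nonneg _) hb hsum
  have hElim : Tendsto (fun n => ‖E n‖) atTop (nhds 0) := by
    have hb : ∀ n, ‖E n‖ ≤ ‖Cs' n‖ + (‖X' * (Aseq n - PA)‖
        + (‖K' * (1 - Pn n)‖ + ‖Y' * (Wn n * (Aseq n * Wn n) - WA)‖)) := by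
      intro n
      have h1 : ‖Pn n * (X' * (Aseq n - PA))‖ ≤ ‖X' * (Aseq n - PA)‖ :=
        aux_norm_left (hP1 n)
      have h2 : ‖Pn n * (K' * (1 - Pn n))‖ ≤ ‖K' * (1 - Pn n)‖ := aux_norm_left (hP1 n)
      have h3 : ‖Wn n * ((Y' * (Wn n * (Aseq n * Wn n) - WA)) * Wn n)‖
          ≤ ‖Y' * (Wn n * (Aseq n * Wn n) - WA)‖ := aux_norm_sand (hW1 n) (hW1 n)
      have h4 := norm_sub_le (Cs' n - Pn n * (X' * (Aseq n - PA)) - Pn n * (K' * (1 - Pn n)))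
        (Wn n * ((Y' * (Wn n * (Aseq n * Wn n) - WA)) * Wn n))
      have h5 := norm_sub_le (Cs' n - Pn n * (X' * (Aseq n - PA))) (Pn n * (K' * (1 - Pn n)))
      have h6 := norm_sub_le (Cs' n) (Pn n * (X' * (Aseq n - PA)))
      simp only [hEdef]
      linarith
    have hsum : Tendsto (fun n => ‖Cs' n‖ + (‖X' * (Aseq n - PA)‖
        + (‖K' * (1 - Pn n)‖ + ‖Y' * (Wn n * (Aseq n * Wn n) - WA)‖))) atTop (nhds 0) := by
      have := hCs'.add (tX'.add (tK'.add tWY'))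
      simpa using this
    exact squeeze_zero (fun n => norm_nonneg _) hb hsum
  -- eventual smallness
  have hevD : ∀ᶠ n in atTop, ‖D n‖ < 1/2 := hDlim.eventually_lt_const (by norm_num)
  have hevE : ∀ᶠ n in atTop, ‖E n‖ < 1/2 := hElim.eventually_lt_const (by norm_num)
  obtain ⟨n₀, hn₀⟩ := eventually_atTop.mp (hevD.and hevE)
  -- uniform bound on the corrected inverses
  have hCB0 : (0:ℝ) ≤ CB := le_trans (norm_nonneg _) (hCB 0)
  have hB1b : ∀ n, ‖B1 n‖ ≤ CB + ‖X‖ + ‖Y‖ := by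
    intro n
    have h1 : ‖Pn n * (X * Pn n)‖ ≤ ‖X‖ := aux_norm_sand (hP1 n) (hP1 n)
    have h2 : ‖Wn n * (Y * Wn n)‖ ≤ ‖Y‖ := aux_norm_sand (hW1 n) (hW1 n)
    have h4 := norm_sub_le (Bseq n - Pn n * (X * Pn n)) (Wn n * (Y * Wn n))
    have h5 := norm_sub_le (Bseq n) (Pn n * (X * Pn n))
    have h6 := hCB n
    simp only [hB1def]
    linarith
  refine ⟨n₀, (CB + ‖X‖ + ‖Y‖) * 2, fun n hn => ?_⟩
  obtain ⟨hDn, hEn⟩ := hn₀ n hn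
  -- the unit 1 + D n
  have hDnorm : ‖-(D n)‖ < 1 := by rw [norm_neg]; linarith
  have hEnorm : ‖-(E n)‖ < 1 := by rw [norm_neg]; linarith
  set U : (lp (fun _ : ℤ => H) 2 →L[ℂ] lp (fun _ : ℤ => H) 2)ˣ :=
    Units.oneSub (-(D n)) hDnorm with hUdef
  set V : (lp (fun _ : ℤ => H) 2 →L[ℂ] lp (fun _ : ℤ => H) 2)ˣ :=
    Units.oneSub (-(E n)) hEnorm with hVdef
  have hUval : (U : lp (fun _ : ℤ => H) 2 →L[ℂ] lp (fun _ : ℤ => H) 2) = 1 + D n := by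
    rw [hUdef]
    show 1 - -(D n) = 1 + D n
    rw [sub_neg_eq_add]
  have hVval : (V : lp (fun _ : ℤ => H) 2 →L[ℂ] lp (fun _ : ℤ => H) 2) = 1 + E n := by
    rw [hVdef]
    show 1 - -(E n) = 1 + E n
    rw [sub_neg_eq_add]
  have hUr : (1 + D n) * ↑U⁻¹ = 1 := by rw [← hUval]; exact U.mul_inv
  have hUl : (↑U⁻¹ : lp (fun _ : ℤ => H) 2 →L[ℂ] lp (fun _ : ℤ => H) 2) * (1 + D n) = 1 := by
    rw [← hUval]; exact U.inv_mul
  have hVr : (1 + E n) * ↑V⁻¹ = 1 := by rw [← hVval]; exact V.mul_inv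
  have hVl : (↑V⁻¹ : lp (fun _ : ℤ => H) 2 →L[ℂ] lp (fun _ : ℤ => H) 2) * (1 + E n) = 1 := by
    rw [← hVval]; exact V.inv_mul
  have hone : ‖(1 : lp (fun _ : ℤ => H) 2 →L[ℂ] lp (fun _ : ℤ => H) 2)‖ ≤ 1 := by
    rw [ContinuousLinearMap.one_def]
    exact ContinuousLinearMap.norm_id_le
  have hUinvnorm : ‖(↑U⁻¹ : lp (fun _ : ℤ => H) 2 →L[ℂ] lp (fun _ : ℤ => H) 2)‖ ≤ 2 := by
    have h1 : (↑U⁻¹ : lp (fun _ : ℤ => H) 2 →L[ℂ] lp (fun _ : ℤ => H) 2)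
        = 1 - D n * ↑U⁻¹ := by
      have h2 := hUr
      rw [add_mul, one_mul] at h2
      exact eq_sub_of_add_eq h2
    have h3 : ‖(↑U⁻¹ : lp (fun _ : ℤ => H) 2 →L[ℂ] lp (fun _ : ℤ => H) 2)‖
        ≤ 1 + ‖D n‖ * ‖(↑U⁻¹ : lp (fun _ : ℤ => H) 2 →L[ℂ] lp (fun _ : ℤ => H) 2)‖ := by
      calc ‖(↑U⁻¹ : lp (fun _ : ℤ => H) 2 →L[ℂ] lp (fun _ : ℤ => H) 2)‖
          = ‖1 - D n * ↑U⁻¹‖ := by rw [← h1]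
        _ ≤ ‖(1 : lp (fun _ : ℤ => H) 2 →L[ℂ] lp (fun _ : ℤ => H) 2)‖ + ‖D n * ↑U⁻¹‖ :=
            norm_sub_le _ _
        _ ≤ 1 + ‖D n‖ * ‖(↑U⁻¹ : lp (fun _ : ℤ => H) 2 →L[ℂ] lp (fun _ : ℤ => H) 2)‖ :=
            add_le_add hone (norm_mul_le _ _)
    nlinarith [norm_nonneg (↑U⁻¹ : lp (fun _ : ℤ => H) 2 →L[ℂ] lp (fun _ : ℤ => H) 2)]
  -- corner relations for B1, B2, D, E
  have hB1P : B1 n * Pn n = B1 n := by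
    have e1 : (Pn n * (X * Pn n)) * Pn n = Pn n * (X * Pn n) := by
      rw [mul_assoc, mul_assoc, hPP n]
    have e2 : (Wn n * (Y * Wn n)) * Pn n = Wn n * (Y * Wn n) := by
      rw [mul_assoc, mul_assoc, hWP n]
    simp only [hB1def]
    rw [sub_mul, sub_mul, hBP_ n, e1, e2]
  have hPB1 : Pn n * B1 n = B1 n := by
    have e1 : Pn n * (Pn n * (X * Pn n)) = Pn n * (X * Pn n) := by
      rw [← mul_assoc, hPP n]
    have e2 : Pn n * (Wn n * (Y * Wn n)) = Wn n * (Y * Wn n) := by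
      rw [← mul_assoc, hPW n]
    simp only [hB1def]
    rw [mul_sub, mul_sub, hPB_ n, e1, e2]
  have hB2P : B2 n * Pn n = B2 n := by
    have e1 : (Pn n * (X' * Pn n)) * Pn n = Pn n * (X' * Pn n) := by
      rw [mul_assoc, mul_assoc, hPP n]
    have e2 : (Wn n * (Y' * Wn n)) * Pn n = Wn n * (Y' * Wn n) := by
      rw [mul_assoc, mul_assoc, hWP n]
    simp only [hB2def]
    rw [sub_mul, sub_mul, hBP_ n, e1, e2]
  have hPB2 : Pn n * B2 n = B2 n := by
    have e1 : Pn n * (Pn n * (X' * Pn n)) = Pn n * (X' * Pn n) := by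
      rw [← mul_assoc, hPP n]
    have e2 : Pn n * (Wn n * (Y' * Wn n)) = Wn n * (Y' * Wn n) := by
      rw [← mul_assoc, hPW n]
    simp only [hB2def]
    rw [mul_sub, mul_sub, hPB_ n, e1, e2]
  have hD' : Aseq n * B1 n - Pn n = D n := by rw [hDeq n]; abel
  have hE' : B2 n * Aseq n - Pn n = E n := by rw [hEeq n]; abel
  have hPD : Pn n * D n = D n := by
    rw [← hD', mul_sub, ← mul_assoc, hPA_ n, hPP n]
  have hDP : D n * Pn n = D n := by
    rw [← hD', sub_mul, mul_assoc, hB1P, hPP n]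
  have hPE : Pn n * E n = E n := by
    rw [← hE', mul_sub, ← mul_assoc, hPB2, hPP n]
  have hEP : E n * Pn n = E n := by
    rw [← hE', sub_mul, mul_assoc, hAP_ n, hPP n]
  -- P commutes with U⁻¹ and V⁻¹
  have hcommU : (1 + D n) * Pn n = Pn n * (1 + D n) := by
    rw [add_mul, mul_add, hPD, hDP, one_mul, mul_one]
  have hPU : Pn n * ↑U⁻¹ = (↑U⁻¹ : lp (fun _ : ℤ => H) 2 →L[ℂ] lp (fun _ : ℤ => H) 2) * Pn n := by
    have h1 : (↑U⁻¹ : lp (fun _ : ℤ => H) 2 →L[ℂ] lp (fun _ : ℤ => H) 2)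
        * ((1 + D n) * (Pn n * ↑U⁻¹)) = Pn n * ↑U⁻¹ := by
      rw [← mul_assoc, hUl, one_mul]
    calc Pn n * ↑U⁻¹ = ↑U⁻¹ * ((1 + D n) * (Pn n * ↑U⁻¹)) := h1.symm
      _ = ↑U⁻¹ * ((1 + D n) * Pn n * ↑U⁻¹) := by rw [mul_assoc]
      _ = ↑U⁻¹ * (Pn n * (1 + D n) * ↑U⁻¹) := by rw [hcommU]
      _ = ↑U⁻¹ * (Pn n * ((1 + D n) * ↑U⁻¹)) := by rw [mul_assoc]
      _ = ↑U⁻¹ * (Pn n * 1) := by rw [hUr]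
      _ = ↑U⁻¹ * Pn n := by rw [mul_one]
  have hcommV : (1 + E n) * Pn n = Pn n * (1 + E n) := by
    rw [add_mul, mul_add, hPE, hEP, one_mul, mul_one]
  have hPV : Pn n * ↑V⁻¹ = (↑V⁻¹ : lp (fun _ : ℤ => H) 2 →L[ℂ] lp (fun _ : ℤ => H) 2) * Pn n := by
    have h1 : (↑V⁻¹ : lp (fun _ : ℤ => H) 2 →L[ℂ] lp (fun _ : ℤ => H) 2)
        * ((1 + E n) * (Pn n * ↑V⁻¹)) = Pn n * ↑V⁻¹ := by
      rw [← mul_assoc, hVl, one_mul]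
    calc Pn n * ↑V⁻¹ = ↑V⁻¹ * ((1 + E n) * (Pn n * ↑V⁻¹)) := h1.symm
      _ = ↑V⁻¹ * ((1 + E n) * Pn n * ↑V⁻¹) := by rw [mul_assoc]
      _ = ↑V⁻¹ * (Pn n * (1 + E n) * ↑V⁻¹) := by rw [hcommV]
      _ = ↑V⁻¹ * (Pn n * ((1 + E n) * ↑V⁻¹)) := by rw [mul_assoc]
      _ = ↑V⁻¹ * (Pn n * 1) := by rw [hVr]
      _ = ↑V⁻¹ * Pn n := by rw [mul_one]
  -- the inverse
  set R : lp (fun _ : ℤ => H) 2 →L[ℂ] lp (fun _ : ℤ => H) 2 := B1 n * (↑U⁻¹ * Pn n) with hRdef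
  have hQP : (1 - Pn n) * Pn n = 0 := by rw [sub_mul, one_mul, hPP n, sub_self]
  have hAR : Aseq n * R = Pn n := by
    have h1 : Aseq n * R = (Pn n + D n) * (↑U⁻¹ * Pn n) := by
      rw [hRdef, ← mul_assoc, hDeq n]
    have h2 : (1 - Pn n) * ↑U⁻¹
        = (↑U⁻¹ : lp (fun _ : ℤ => H) 2 →L[ℂ] lp (fun _ : ℤ => H) 2) * (1 - Pn n) := by
      rw [sub_mul, mul_sub, one_mul, mul_one, hPU]
    have h3 : (Pn n + D n : lp (fun _ : ℤ => H) 2 →L[ℂ] lp (fun _ : ℤ => H) 2)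
        = (1 + D n) - (1 - Pn n) := by abel
    rw [h1, h3, sub_mul, ← mul_assoc, hUr, one_mul, ← mul_assoc, h2, mul_assoc, hQP,
      mul_zero, sub_zero]
  set Lop : lp (fun _ : ℤ => H) 2 →L[ℂ] lp (fun _ : ℤ => H) 2 := (Pn n * ↑V⁻¹) * B2 n
    with hLopdef
  have hPQ : Pn n * (1 - Pn n) = 0 := by rw [mul_sub, mul_one, hPP n, sub_self]
  have hLA : Lop * Aseq n = Pn n := by
    have h1 : Lop * Aseq n = (Pn n * ↑V⁻¹) * (Pn n + E n) := by
      rw [hLopdef, mul_assoc, hEeq n]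
    have h3 : (Pn n + E n : lp (fun _ : ℤ => H) 2 →L[ℂ] lp (fun _ : ℤ => H) 2)
        = (1 + E n) - (1 - Pn n) := by abel
    have h2 : (↑V⁻¹ : lp (fun _ : ℤ => H) 2 →L[ℂ] lp (fun _ : ℤ => H) 2) * (1 - Pn n)
        = (1 - Pn n) * ↑V⁻¹ := by
      rw [sub_mul, mul_sub, one_mul, mul_one, hPV]
    rw [h1, h3, mul_sub, mul_assoc, hVl, mul_one, mul_assoc, h2, ← mul_assoc, hPQ,
      zero_mul, sub_zero]
  have hRP : R * Pn n = R := by rw [hRdef, mul_assoc, mul_assoc, hPP n]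
  have hPR : Pn n * R = R := by rw [hRdef, ← mul_assoc, hPB1]
  have hLP : Lop * Pn n = Lop := by rw [hLopdef, mul_assoc, hB2P]
  have hRL : R = Lop := by
    calc R = Pn n * R := hPR.symm
      _ = (Lop * Aseq n) * R := by rw [hLA]
      _ = Lop * (Aseq n * R) := by rw [mul_assoc]
      _ = Lop * Pn n := by rw [hAR]
      _ = Lop := hLP
  have hRA : R * Aseq n = Pn n := by rw [hRL]; exact hLA
  have hPRP : Pn n * (R * Pn n) = R := by rw [hRP, hPR]
  have hUP2 : ‖(↑U⁻¹ * Pn n : lp (fun _ : ℤ => H) 2 →L[ℂ] lp (fun _ : ℤ => H) 2)‖ ≤ 2 :=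
    le_trans (aux_norm_right (hP1 n)) hUinvnorm
  have hnR : ‖R‖ ≤ (CB + ‖X‖ + ‖Y‖) * 2 := by
    refine le_trans (norm_mul_le _ _) ?_
    exact mul_le_mul (hB1b n) hUP2 (norm_nonneg _)
      (by linarith [norm_nonneg X, norm_nonneg Y])
  exact ⟨R, hPRP, hAR, hRA, hnR⟩
end
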